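/- arXiv:cs/0601116 — 2 statements merged into one kernel-verified Lean document; each statement's English description precedes it below -/
import Mathlib

section
/- Let π be a subset seed of span m over a finite alphabet A with distinguished letter 1, with r = |R_π| and w = m − r, and suppose that 1 ∉ R_π (i.e., π_1 = {1}, as is the case for ordinary spaced seeds). Then the set of all pairs (X,t) with X ⊆ R_π, t ∈ ℕ and max(X ∪ {0}) + t ≤ m − 1 has cardinality at most w·2^r. -/
/-- The set `R_π` of non-`#` positions of a subset seed `π` of span `m` over an alphabet
with distinguished "match" letter `one`: positions `i ∈ [1..m]` with `π i ≠ {one}`. -/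
def Rpi {A : Type*} [DecidableEq A] (m : ℕ) (one : A) (π : ℕ → Finset A) : Finset ℕ :=
  (Finset.Icc 1 m).filter (fun i => π i ≠ {one})

/-- Transition function `ψ` of the subset seed automaton `S_π`.  States are pairs
`(X, t)` with `X : Finset ℕ` and `t : ℕ`; note that `max (X ∪ {0}) = X.sup id`.
A state is final when `max (X ∪ {0}) + t ≥ m`; final states are fixed.  On a
non-final state `(X, t)`: reading `one` yields `(X, t+1)`; reading `a ≠ one`
yields `(X_U ∪ X_V, 0)` with `X_U = {x ∈ R_π : x ≤ t+1 ∧ a ∈ π x}` and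
`X_V = {x+t+1 : x ∈ X, x+t+1 ≤ m, a ∈ π (x+t+1)}`. -/
def seedStep {A : Type*} [DecidableEq A] (m : ℕ) (one : A) (π : ℕ → Finset A)
    (q : Finset ℕ × ℕ) (a : A) : Finset ℕ × ℕ :=
  if m ≤ q.1.sup id + q.2 then q
  else if a = one then (q.1, q.2 + 1)
  else ((Rpi m one π).filter (fun x => x ≤ q.2 + 1 ∧ a ∈ π x) ∪
        ((q.1.filter (fun x => x + q.2 + 1 ≤ m ∧ a ∈ π (x + q.2 + 1))).image
          (fun x => x + q.2 + 1)), 0)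

/-- The extension `ψ*` of the transition function of `S_π` to words,
reading letters left to right from state `q`. -/
def seedRun {A : Type*} [DecidableEq A] (m : ℕ) (one : A) (π : ℕ → Finset A)
    (q : Finset ℕ × ℕ) : List A → Finset ℕ × ℕ
  | [] => q
  | a :: s => seedRun m one π (seedStep m one π q a) s


/-!
For a fixed `X` the admissible `t` are `0, …, m - 1 - max X`, so the set has
`∑_{X ⊆ R_π} (m - max X)` elements, and `1 ∉ R_π` puts `R_π` inside `[2, m]`.
Induct on `R_π` by its largest element `M`: with `S = R_π \ {M}`, the subsets containing `M`
contribute `(m - M) 2^|S|`, and `S ⊆ [2, M - 1]` forces `M ≥ |S| + 2`, which is exactly what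
keeps the total below `(m - r) 2^r`.
-/

open Finset

lemma card_filter_sup_add_lt_eq_sum (S : Finset (Finset ℕ)) (m : ℕ) :
    ((S ×ˢ range m).filter (fun q : Finset ℕ × ℕ => q.1.sup id + q.2 + 1 ≤ m)).card
      = ∑ X ∈ S, (m - X.sup id) := by
  rw [card_filter, sum_product]
  refine sum_congr rfl fun X _ => ?_
  rw [← card_filter, ← card_range (m - X.sup id)]
  congr 1
  ext t
  simp only [mem_filter, mem_range]
  omega

lemma sum_powerset_insert_sub_sup {s : Finset ℕ} {a : ℕ} (ha : ∀ x ∈ s, x < a) (m : ℕ) :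
    ∑ X ∈ (insert a s).powerset, (m - X.sup id)
      = ∑ X ∈ s.powerset, (m - X.sup id) + (m - a) * 2 ^ #s := by
  have has : a ∉ s := fun h => (ha a h).false
  have hsup : ∀ X ∈ s.powerset, (insert a X).sup id = a := fun X hX => by
    rw [sup_insert]
    exact max_eq_left <| Finset.sup_le fun x hx => (ha x (mem_powerset.mp hX hx)).le
  have hnew : ∑ X ∈ s.powerset, (m - (insert a X).sup id) = (m - a) * 2 ^ #s := by
    rw [sum_congr rfl fun X hX => by rw [hsup X hX], sum_const, card_powerset, smul_eq_mul,
      mul_comm]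
  rw [sum_powerset_insert has, hnew]

lemma sum_powerset_sub_sup_le {m : ℕ} {R : Finset ℕ} (hR : R ⊆ Icc 2 m) :
    ∑ X ∈ R.powerset, (m - X.sup id) ≤ (m - #R) * 2 ^ #R := by
  induction R using Finset.induction_on_max with
  | empty => simp
  | insert a s ha ih =>
    have ha_mem : a ∈ Icc 2 m := hR (mem_insert_self a s)
    have hs : s ⊆ Icc 2 m := (subset_insert a s).trans hR
    have hcard_s : #s ≤ a - 2 := by
      calc #s ≤ #(Ico 2 a) :=
            card_le_card fun x hx => mem_Ico.mpr ⟨(mem_Icc.mp (hs hx)).1, ha x hx⟩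
        _ = a - 2 := Nat.card_Ico 2 a
    have hcard : #(insert a s) = #s + 1 := card_insert_of_notMem fun h => (ha a h).false
    rw [mem_Icc] at ha_mem
    rw [sum_powerset_insert_sub_sup ha, hcard]
    calc ∑ X ∈ s.powerset, (m - X.sup id) + (m - a) * 2 ^ #s
        ≤ (m - #s) * 2 ^ #s + (m - a) * 2 ^ #s := Nat.add_le_add_right (ih hs) _
      _ = ((m - #s) + (m - a)) * 2 ^ #s := by ring
      _ ≤ (2 * (m - (#s + 1))) * 2 ^ #s := Nat.mul_le_mul_right _ (by omega)
      _ = (m - (#s + 1)) * 2 ^ (#s + 1) := by ring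

lemma Rpi_subset_Icc_two {A : Type*} [DecidableEq A] {m : ℕ} {one : A} {π : ℕ → Finset A}
    (h1 : 1 ∉ Rpi m one π) : Rpi m one π ⊆ Icc 2 m := by
  intro i hi
  have hi' := mem_Icc.mp (mem_filter.mp hi).1
  have : i ≠ 1 := by rintro rfl; exact h1 hi
  exact mem_Icc.mpr ⟨by omega, hi'.2⟩

theorem seedAutomaton_number_of_states_of_one_not_mem_general
    {A : Type*} [DecidableEq A] (m : ℕ) (one : A) (π : ℕ → Finset A)
    (h1 : 1 ∉ Rpi m one π) :
    (((Rpi m one π).powerset ×ˢ Finset.range m).filter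
        (fun q : Finset ℕ × ℕ => q.1.sup id + q.2 + 1 ≤ m)).card
      ≤ (m - (Rpi m one π).card) * 2 ^ (Rpi m one π).card := by
  rw [card_filter_sup_add_lt_eq_sum]
  exact sum_powerset_sub_sup_le (Rpi_subset_Icc_two h1)

/-- if `1 ∉ R_π` (i.e. `π_1 = {1}`, as for ordinary spaced seeds), then the set
of all pairs `(X,t)` with `X ⊆ R_π` and `max(X ∪ {0}) + t ≤ m − 1` has cardinality at most
`w·2^r`, where `r = |R_π|` and `w = m − r`. -/
theorem seedAutomaton_number_of_states_of_one_not_mem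
    {A : Type*} [DecidableEq A] (m : ℕ) (one : A) (π : ℕ → Finset A)
    (hπ : ∀ i ∈ Finset.Icc 1 m, one ∈ π i)
    (h1 : 1 ∉ Rpi m one π) :
    (((Rpi m one π).powerset ×ˢ Finset.range m).filter
        (fun q : Finset ℕ × ℕ => q.1.sup id + q.2 + 1 ≤ m)).card
      ≤ (m - (Rpi m one π).card) * 2 ^ (Rpi m one π).card :=
  seedAutomaton_number_of_states_of_one_not_mem_general m one π h1
end

section
/- Let π be a subset seed of span m over a finite alphabet A with distinguished letter 1 such that 1 ∉ R_π (i.e., π_1 = {1}). Suppose (X,t) is a non-final state of S_π with X ≠ ∅ and ψ*((∅,0), u) = (X,t) for some word u ∈ A*. Then there exists a word u' ∈ A* with |u'| < |u| such that ψ*((∅,0), u') = (X \ {max X}, t). In particular, if (X,t) is reachable then (X \ {max X}, t) is reachable by a strictly shorter word. -/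
/-!
Induction on the length of `u = w b`, with `(Y, s)` the state reached by `w`. If `b = 1`, then
`X = Y` and a shorter word for `Y \ {max Y}` followed by `1` works. If `b ≠ 1`, then
`X = X_U ∪ X_V`. When `Y = ∅`, `X = X_U` is an initial segment of the positions of `R_π` that
accept `b`, and it loses its maximum `M` when `b` is read after `1^(M-2)` instead; `π_1 = {1}`
gives `M ≥ 2`. When `Y ≠ ∅`, replacing `w` by a shorter word reaching `(Y \ {max Y}, s)` removes
only `max Y + s + 1` from `X`, an upper bound of `X`: either this is `max X`, or `(X, 0)` itself
has been reached by a shorter word and the induction hypothesis applies to it.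
-/

lemma Finset.erase_eq_self_or_erase_max' {α : Type*} [LinearOrder α] {X : Finset α}
    (hne : X.Nonempty) {c : α} (hc : ∀ x ∈ X, x ≤ c) :
    X.erase c = X ∨ X.erase c = X.erase (X.max' hne) := by
  by_cases hcX : c ∈ X
  · exact Or.inr (by rw [(X.max'_eq_iff hne c).2 ⟨hcX, hc⟩])
  · exact Or.inl (Finset.erase_eq_of_notMem hcX)

section SeedAutomaton

variable {A : Type*} [DecidableEq A] (m : ℕ) (one : A) (π : ℕ → Finset A)

/-- The set `X_U` of the transition on a letter `a ≠ one` out of a state `(X, j)`. -/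
def seedEntry (a : A) (j : ℕ) : Finset ℕ :=
  (Rpi m one π).filter (fun x => x ≤ j + 1 ∧ a ∈ π x)

/-- The set `X_V` of the transition on a letter `a ≠ one` out of a state `(X, j)`. -/
def seedShift (a : A) (j : ℕ) (X : Finset ℕ) : Finset ℕ :=
  (X.filter (fun x => x + j + 1 ≤ m ∧ a ∈ π (x + j + 1))).image (fun x => x + j + 1)

variable {m one π}

lemma seedStep_of_le {q : Finset ℕ × ℕ} (hq : m ≤ q.1.sup id + q.2) (a : A) :
    seedStep m one π q a = q :=
  if_pos hq

lemma seedStep_one {X : Finset ℕ} {j : ℕ} (h : X.sup id + j < m) :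
    seedStep m one π (X, j) one = (X, j + 1) := by
  rw [seedStep, if_neg h.not_ge, if_pos rfl]

lemma seedStep_of_ne_one {X : Finset ℕ} {j : ℕ} (h : X.sup id + j < m) {a : A} (ha : a ≠ one) :
    seedStep m one π (X, j) a = (seedEntry m one π a j ∪ seedShift m π a j X, 0) := by
  rw [seedStep, if_neg h.not_ge, if_neg ha]
  rfl

lemma seedStep_snd_le (q : Finset ℕ × ℕ) (a : A) : (seedStep m one π q a).2 ≤ q.2 + 1 := by
  unfold seedStep
  split_ifs <;> simp

lemma seedShift_subset_Rpi {a : A} (ha : a ≠ one) (j : ℕ) (X : Finset ℕ) :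
    seedShift m π a j X ⊆ Rpi m one π := by
  intro x hx
  obtain ⟨y, hy, rfl⟩ := Finset.mem_image.1 hx
  obtain ⟨-, hym, hya⟩ := Finset.mem_filter.1 hy
  refine Finset.mem_filter.2 ⟨Finset.mem_Icc.2 ⟨by omega, hym⟩, fun h => ha ?_⟩
  rwa [h, Finset.mem_singleton] at hya

lemma seedStep_fst_subset_Rpi {q : Finset ℕ × ℕ} (hq : q.1 ⊆ Rpi m one π) (a : A) :
    (seedStep m one π q a).1 ⊆ Rpi m one π := by
  unfold seedStep
  split_ifs with _ ha
  · exact hq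
  · exact hq
  · exact Finset.union_subset (Finset.filter_subset _ _) (seedShift_subset_Rpi ha _ _)

lemma seedRun_concat (q : Finset ℕ × ℕ) (w : List A) (b : A) :
    seedRun m one π q (w ++ [b]) = seedStep m one π (seedRun m one π q w) b := by
  induction w generalizing q with
  | nil => rfl
  | cons a w ih => exact ih _

lemma snd_le_of_seedRun_eq {q r : Finset ℕ × ℕ} {w : List A} (h : seedRun m one π q w = r) :
    r.2 ≤ q.2 + w.length := by
  induction w generalizing q with
  | nil => simp [← h, seedRun]
  | cons a w ih =>
    have := seedStep_snd_le (m := m) (one := one) (π := π) q a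
    grind [seedRun]

lemma fst_subset_Rpi_of_seedRun_eq {q r : Finset ℕ × ℕ} (hq : q.1 ⊆ Rpi m one π) {w : List A}
    (h : seedRun m one π q w = r) : r.1 ⊆ Rpi m one π := by
  induction w generalizing q with
  | nil => exact h ▸ hq
  | cons a w ih => exact ih (seedStep_fst_subset_Rpi hq a) h

lemma seedRun_replicate_one {X : Finset ℕ} {j k : ℕ} (h : X.sup id + (j + k) < m) :
    seedRun m one π (X, j) (List.replicate k one) = (X, j + k) := by
  induction k generalizing j with
  | zero => rfl
  | succ k ih =>
    rw [List.replicate_succ, seedRun, seedStep_one (by omega), ih (by omega)]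
    ac_rfl

lemma mem_Rpi {x : ℕ} : x ∈ Rpi m one π ↔ (1 ≤ x ∧ x ≤ m) ∧ π x ≠ {one} := by
  rw [Rpi, Finset.mem_filter, Finset.mem_Icc]

lemma le_of_mem_seedEntry {a : A} {j x : ℕ} (hx : x ∈ seedEntry m one π a j) : x ≤ j + 1 :=
  (Finset.mem_filter.1 hx).2.1

lemma two_le_of_mem_seedEntry (h1 : 1 ∉ Rpi m one π) {a : A} {j x : ℕ}
    (hx : x ∈ seedEntry m one π a j) : 2 ≤ x := by
  have hxR := (Finset.mem_filter.1 hx).1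
  have hx1 := (mem_Rpi.1 hxR).1.1
  by_contra hx2
  obtain rfl : x = 1 := by omega
  exact h1 hxR

lemma seedEntry_erase_max' (h1 : 1 ∉ Rpi m one π) {a : A} {j : ℕ}
    (hne : (seedEntry m one π a j).Nonempty) :
    (seedEntry m one π a j).erase ((seedEntry m one π a j).max' hne) =
      seedEntry m one π a ((seedEntry m one π a j).max' hne - 2) := by
  have hM2 := two_le_of_mem_seedEntry h1 ((seedEntry m one π a j).max'_mem hne)
  have hMj := le_of_mem_seedEntry ((seedEntry m one π a j).max'_mem hne)
  ext x
  constructor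
  · intro hx
    obtain ⟨hxM, hx⟩ := Finset.mem_erase.1 hx
    have := (seedEntry m one π a j).le_max' x hx
    obtain ⟨hxR, -, hxa⟩ := Finset.mem_filter.1 hx
    exact Finset.mem_filter.2 ⟨hxR, by omega, hxa⟩
  · intro hx
    obtain ⟨hxR, hxM, hxa⟩ := Finset.mem_filter.1 hx
    exact Finset.mem_erase.2 ⟨by omega, Finset.mem_filter.2 ⟨hxR, by omega, hxa⟩⟩

@[simp]
lemma seedShift_empty (a : A) (j : ℕ) : seedShift m π a j ∅ = ∅ := rfl

lemma seedShift_erase (a : A) (j : ℕ) (Y : Finset ℕ) (y : ℕ) :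
    seedShift m π a j (Y.erase y) = (seedShift m π a j Y).erase (y + j + 1) := by
  rw [seedShift, seedShift, Finset.filter_erase,
    Finset.image_erase (fun x x' h => by simpa using h)]

lemma le_of_mem_seedShift {a : A} {j x : ℕ} {Y : Finset ℕ} (hY : Y.Nonempty)
    (hx : x ∈ seedShift m π a j Y) : x ≤ Y.max' hY + j + 1 := by
  obtain ⟨y, hy, rfl⟩ := Finset.mem_image.1 hx
  have := Y.le_max' y (Finset.mem_filter.1 hy).1
  omega

lemma sup_add_lt_of_seedStep_eq {Y X : Finset ℕ} {s t : ℕ} {b : A}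
    (h : seedStep m one π (Y, s) b = (X, t)) (hX : X.sup id + t < m) : Y.sup id + s < m := by
  by_contra! hfin
  rw [seedStep_of_le hfin, Prod.mk.injEq] at h
  obtain ⟨rfl, rfl⟩ := h
  omega

lemma seedRun_replicate_one_concat_eq_erase_max' (h1 : 1 ∉ Rpi m one π) {a : A} (ha : a ≠ one)
    {j : ℕ} {X : Finset ℕ} (hX : seedEntry m one π a j = X) (hne : X.Nonempty) :
    seedRun m one π (∅, 0) (List.replicate (X.max' hne - 2) one ++ [a]) =
      (X.erase (X.max' hne), 0) := by
  subst hX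
  have hM2 := two_le_of_mem_seedEntry h1 ((seedEntry m one π a j).max'_mem hne)
  have hMm := (mem_Rpi.1 (Finset.mem_filter.1 ((seedEntry m one π a j).max'_mem hne)).1).1.2
  have hsup : (∅ : Finset ℕ).sup id = 0 := rfl
  rw [seedRun_concat, seedRun_replicate_one (by omega), seedStep_of_ne_one (by omega) ha,
    seedShift_empty, Finset.union_empty, seedEntry_erase_max' h1, Nat.zero_add]

lemma exists_shorter_seedRun_erase_max'_of_seedRun_eq_empty (h1 : 1 ∉ Rpi m one π) {a : A}
    (ha : a ≠ one) {w : List A} {s : ℕ} (hw : seedRun m one π (∅, 0) w = (∅, s)) {X : Finset ℕ}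
    (hX : seedEntry m one π a s = X) (hne : X.Nonempty) :
    ∃ u' : List A, u'.length < (w ++ [a]).length ∧
      seedRun m one π (∅, 0) u' = (X.erase (X.max' hne), 0) := by
  have hs : s ≤ 0 + w.length := snd_le_of_seedRun_eq hw
  have hM : X.max' hne ≤ s + 1 := X.max'_le hne _ fun x hx => le_of_mem_seedEntry (hX ▸ hx)
  have hM2 : 2 ≤ X.max' hne := two_le_of_mem_seedEntry h1 (by rw [hX]; exact X.max'_mem hne)
  refine ⟨_, ?_, seedRun_replicate_one_concat_eq_erase_max' h1 ha hX hne⟩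
  simp only [List.length_append, List.length_replicate, List.length_singleton]
  omega

lemma seedStep_erase_max' {Y : Finset ℕ} {s : ℕ} (hs : Y.sup id + s < m) (hY : Y.Nonempty)
    (hYR : Y ⊆ Rpi m one π) {a : A} (ha : a ≠ one) :
    seedStep m one π (Y.erase (Y.max' hY), s) a =
      ((seedEntry m one π a s ∪ seedShift m π a s Y).erase (Y.max' hY + s + 1), 0) := by
  have hN := (mem_Rpi.1 (hYR (Y.max'_mem hY))).1.1
  have hsup : (Y.erase (Y.max' hY)).sup id ≤ Y.sup id := Finset.sup_mono (Finset.erase_subset _ _)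
  have hc : Y.max' hY + s + 1 ∉ seedEntry m one π a s := fun h => by
    have := le_of_mem_seedEntry h
    omega
  rw [seedStep_of_ne_one (by omega) ha, seedShift_erase, Finset.erase_union_distrib,
    Finset.erase_eq_of_notMem hc]

lemma seedStep_erase_max'_eq_self_or_erase_max' {Y : Finset ℕ} {s : ℕ} (hs : Y.sup id + s < m)
    (hY : Y.Nonempty) (hYR : Y ⊆ Rpi m one π) {a : A} (ha : a ≠ one) {X : Finset ℕ}
    (hX : seedEntry m one π a s ∪ seedShift m π a s Y = X) (hne : X.Nonempty) :
    seedStep m one π (Y.erase (Y.max' hY), s) a = (X, 0) ∨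
      seedStep m one π (Y.erase (Y.max' hY), s) a = (X.erase (X.max' hne), 0) := by
  have hc : ∀ x ∈ X, x ≤ Y.max' hY + s + 1 := by
    rw [← hX]
    intro x hx
    rcases Finset.mem_union.1 hx with hx | hx
    · have := le_of_mem_seedEntry hx
      omega
    · exact le_of_mem_seedShift hY hx
  rw [seedStep_erase_max' hs hY hYR ha, hX]
  rcases Finset.erase_eq_self_or_erase_max' hne hc with hXc | hXc <;> simp [hXc]

end SeedAutomaton

/-- for a subset seed `π` with `1 ∉ R_π` (i.e. `π_1 = {1}`), if a non-final
state `(X,t)` with `X ≠ ∅` is reached from the initial state by a word `u`, then the state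
`(X \ {max X}, t)` is reached from the initial state by a strictly shorter word. -/
theorem seedAutomaton_erase_max_reachable_by_shorter_word
    {A : Type*} [DecidableEq A] (m : ℕ) (one : A) (π : ℕ → Finset A)
    (h1 : 1 ∉ Rpi m one π)
    (X : Finset ℕ) (t : ℕ) (hne : X.Nonempty)
    (hnf : X.sup id + t < m)
    (u : List A) (hu : seedRun m one π (∅, 0) u = (X, t)) :
    ∃ u' : List A, u'.length < u.length ∧
      seedRun m one π (∅, 0) u' = (X.erase (X.max' hne), t) := by
  obtain rfl | ⟨w, b, rfl⟩ := u.eq_nil_or_concat'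
  · exact absurd (congrArg Prod.fst hu).symm hne.ne_empty
  rcases hw : seedRun m one π (∅, 0) w with ⟨Y, s⟩
  rw [seedRun_concat, hw] at hu
  have hYs := sup_add_lt_of_seedStep_eq hu hnf
  by_cases hb : b = one
  · rw [hb, seedStep_one hYs, Prod.mk.injEq] at hu
    obtain ⟨rfl, rfl⟩ := hu
    obtain ⟨w', hw', hrun⟩ :=
      seedAutomaton_erase_max_reachable_by_shorter_word m one π h1 Y s hne hYs w hw
    have hsup : (Y.erase (Y.max' hne)).sup id ≤ Y.sup id :=
      Finset.sup_mono (Finset.erase_subset _ _)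
    exact ⟨w' ++ [one], by simpa, by rw [seedRun_concat, hrun, seedStep_one (by omega)]⟩
  rw [seedStep_of_ne_one hYs hb, Prod.mk.injEq] at hu
  obtain ⟨hX, rfl⟩ := hu
  rcases Y.eq_empty_or_nonempty with rfl | hY
  · exact exists_shorter_seedRun_erase_max'_of_seedRun_eq_empty h1 hb hw
      (by simpa using hX) hne
  obtain ⟨w', hw', hrun⟩ :=
    seedAutomaton_erase_max_reachable_by_shorter_word m one π h1 Y s hY hYs w hw
  have hYR : Y ⊆ Rpi m one π := fst_subset_Rpi_of_seedRun_eq (Finset.empty_subset _) hw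
  rcases seedStep_erase_max'_eq_self_or_erase_max' hYs hY hYR hb hX hne with hstep | hstep
  · obtain ⟨u', hu', hrun'⟩ := seedAutomaton_erase_max_reachable_by_shorter_word m one π h1 X 0
      hne hnf (w' ++ [b]) (by rw [seedRun_concat, hrun, hstep])
    exact ⟨u', by simp only [List.length_append, List.length_singleton] at hu' ⊢; omega, hrun'⟩
  · exact ⟨w' ++ [b], by simpa, by rw [seedRun_concat, hrun, hstep]⟩
termination_by u.length
decreasing_by all_goals subst_vars; simp only [List.length_append, List.length_singleton]; omega
end
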